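/- Let G be a finite st-DAG with a channel decomposition S_c = {C_1, ..., C_k}. Assign to each vertex v the k-tuple D(v) where D_i(v) is the position of v in C_i if v ∈ C_i, and otherwise the position of Proj_{C_i}(v) in C_i. Then for all vertices u, v: u reaches v if and only if D_i(u) ≤ D_i(v) for all i = 1, ..., k, and distinct vertices receive distinct tuples. -/

import Mathlib

/-- Reachability in a digraph: reflexive-transitive closure of the edge relation. -/
def reaches {V : Type*} (E : V → V → Prop) : V → V → Prop :=
  Relation.ReflTransGen E

/-!
On a channel, `reaches` is a total order agreeing with the list order, so the coordinate
`D_i(v)` is the position of the first vertex of `C_i` reachable from `v`. If `u` reaches `v`,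
everything reachable from `v` is reachable from `u`, so `D_i(u) ≤ D_i(v)`. Conversely, `v`
lies on some channel `C_j`, and `D_j(u) ≤ D_j(v)` says that the projection of `u` on `C_j`,
which `u` reaches, comes no later than `v` on that channel. Injectivity follows from
acyclicity.
-/

namespace List

variable {α : Type*} [BEq α] [LawfulBEq α] {R : α → α → Prop} {l : List α} {a b : α}

theorem Pairwise.rel_of_idxOf_le (hR : ∀ a, R a a) (hl : l.Pairwise R) (ha : a ∈ l)
    (hb : b ∈ l) (h : l.idxOf a ≤ l.idxOf b) : R a b := by
  rcases h.lt_or_eq with hlt | heq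
  · simpa using pairwise_iff_getElem.1 hl _ _ (idxOf_lt_length_iff.2 ha)
      (idxOf_lt_length_iff.2 hb) hlt
  · rw [(idxOf_inj ha).1 heq]
    exact hR b

theorem Pairwise.idxOf_le_of_rel (hR : ∀ a, R a a) (hanti : ∀ a b, R a b → R b a → a = b)
    (hl : l.Pairwise R) (ha : a ∈ l) (hb : b ∈ l) (hab : R a b) : l.idxOf a ≤ l.idxOf b := by
  by_contra! hlt
  have hba : R b a := hl.rel_of_idxOf_le hR hb ha hlt.le
  exact hlt.ne (by rw [hanti a b hab hba])

end List

section Projection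

variable {V : Type*} [DecidableEq V] {E : V → V → Prop} {l : List V} {u v p q : V}

def IsProj (E : V → V → Prop) (l : List V) (v p : V) : Prop :=
  p ∈ l ∧ reaches E v p ∧ ∀ w ∈ l, reaches E v w → l.idxOf p ≤ l.idxOf w

theorem isProj_self (hacyc : ∀ u v : V, reaches E u v → reaches E v u → u = v)
    (hl : l.Pairwise (reaches E)) (hv : v ∈ l) : IsProj E l v v :=
  ⟨hv, .refl, fun _ hw hvw =>
    hl.idxOf_le_of_rel (fun _ => .refl) hacyc hv hw hvw⟩

theorem IsProj.idxOf_le_of_reaches (hu : IsProj E l u q) (hv : IsProj E l v p)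
    (huv : reaches E u v) : l.idxOf q ≤ l.idxOf p :=
  hu.2.2 p hv.1 (huv.trans hv.2.1)

theorem IsProj.reaches_of_idxOf_le (hl : l.Pairwise (reaches E)) (hu : IsProj E l u q)
    (hv : v ∈ l) (h : l.idxOf q ≤ l.idxOf v) : reaches E u v :=
  hu.2.1.trans (hl.rel_of_idxOf_le (fun _ => .refl) hu.1 hv h)

end Projection

theorem stmt_10_general {V : Type*} [DecidableEq V] (E : V → V → Prop)
    (hacyc : ∀ u v : V, reaches E u v → reaches E v u → u = v)
    (k : ℕ) (C : Fin k → List V)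
    (hch : ∀ i, (C i).Pairwise (reaches E))
    (hcover : ∀ v : V, ∃ i, v ∈ C i)
    (D : V → Fin k → ℕ)
    (hDin : ∀ i, ∀ v ∈ C i, D v i = (C i).idxOf v)
    (hDproj : ∀ i, ∀ v : V, v ∉ C i → ∃ p ∈ C i,
        D v i = (C i).idxOf p ∧ reaches E v p ∧
        ∀ w ∈ C i, reaches E v w → (C i).idxOf p ≤ (C i).idxOf w) :
    (∀ u v : V, reaches E u v ↔ ∀ i, D u i ≤ D v i) ∧ Function.Injective D := by
  have proj : ∀ i v, ∃ p, IsProj E (C i) v p ∧ D v i = (C i).idxOf p := by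
    intro i v
    by_cases hv : v ∈ C i
    · exact ⟨v, isProj_self hacyc (hch i) hv, hDin i v hv⟩
    · obtain ⟨p, hp, hD, hvp, hmin⟩ := hDproj i v hv
      exact ⟨p, ⟨hp, hvp, hmin⟩, hD⟩
  have dominance : ∀ u v, reaches E u v ↔ ∀ i, D u i ≤ D v i := by
    refine fun u v => ⟨fun huv i => ?_, fun h => ?_⟩
    · obtain ⟨q, hq, hDu⟩ := proj i u
      obtain ⟨p, hp, hDv⟩ := proj i v
      rw [hDu, hDv]
      exact hq.idxOf_le_of_reaches hp huv
    · obtain ⟨j, hvj⟩ := hcover v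
      obtain ⟨q, hq, hDu⟩ := proj j u
      exact hq.reaches_of_idxOf_le (hch j) hvj (hDu ▸ hDin j v hvj ▸ h j)
  refine ⟨dominance, fun u v huv => hacyc u v ?_ ?_⟩
  · exact (dominance u v).2 fun i => (congrFun huv i).le
  · exact (dominance v u).2 fun i => (congrFun huv i).ge

/-- Algorithm kD-Draw produces a k-dimensional dominance drawing: u reaches v
iff all k coordinates of u are ≤ those of v, and distinct vertices receive
distinct tuples. -/
theorem stmt_10 {V : Type*} [Fintype V] [DecidableEq V] (E : V → V → Prop)
    (hacyc : ∀ u v : V, reaches E u v → reaches E v u → u = v)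
    (s t : V) (hs : ∀ v, reaches E s v) (ht : ∀ v, reaches E v t)
    (k : ℕ) (C : Fin k → List V)
    (hch : ∀ i, (C i).Pairwise (reaches E)) (hnd : ∀ i, (C i).Nodup)
    (hst : ∀ i, s ∈ C i ∧ t ∈ C i)
    (hcover : ∀ v : V, ∃ i, v ∈ C i)
    (hpart : ∀ v : V, v ≠ s → v ≠ t → ∃! i, v ∈ C i)
    (D : V → Fin k → ℕ)
    (hDin : ∀ i, ∀ v ∈ C i, D v i = (C i).idxOf v)
    (hDproj : ∀ i, ∀ v : V, v ∉ C i → ∃ p ∈ C i,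
        D v i = (C i).idxOf p ∧ reaches E v p ∧
        ∀ w ∈ C i, reaches E v w → (C i).idxOf p ≤ (C i).idxOf w) :
    (∀ u v : V, reaches E u v ↔ ∀ i, D u i ≤ D v i) ∧ Function.Injective D :=
  stmt_10_general E hacyc k C hch hcover D hDin hDproj
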